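/- Let S = {a_1, ..., a_k} be a multiset of numbers in [n] with S_{[k]} = Σ_i a_i − n(k−1) > 0. Let V_1, ..., V_k be subspaces of C^n such that dim(V_L) ≤ S_L for every L ⊆ [k], where V_L = ∩_{i∈L} V_i and S_L = Σ_{l∈L} a_l − n(|L|−1). Then there exist subspaces W_1, ..., W_k of C^n with dim(W_i) = a_i, V_i ⊆ W_i for each i, and dim(∩_{i∈[k]} W_i) = S_{[k]}. -/

import Mathlib

open Module Submodule

private lemma exists_avoid {E : Type*} [AddCommGroup E] [Module ℂ E]
    (s : Finset (Submodule ℂ E)) (hs : ∀ p ∈ s, p ≠ ⊤) : ∃ v : E, ∀ p ∈ s, v ∉ p := by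
  have h := Subspace.biUnion_ne_univ_of_top_notMem (s := s) (fun h => hs ⊤ h rfl)
  rw [Set.ne_univ_iff_exists_notMem] at h
  obtain ⟨v, hv⟩ := h
  exact ⟨v, fun p hp hvp => hv (Set.mem_biUnion hp hvp)⟩

private lemma inf_dim_lower (n : ℕ) {k : ℕ} (V : Fin k → Submodule ℂ (Fin n → ℂ))
    (s : Finset (Fin k)) :
    (∑ i ∈ s, (finrank ℂ (V i) : ℤ)) - n * ((s.card : ℤ) - 1)
      ≤ (finrank ℂ (⨅ i ∈ s, V i : Submodule ℂ (Fin n → ℂ)) : ℤ) := by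
  induction s using Finset.induction with
  | empty =>
    have h : (⨅ i ∈ (∅ : Finset (Fin k)), V i) = ⊤ := by simp
    rw [h]
    simp
  | @insert i s hi ih =>
    rw [Finset.iInf_insert, Finset.sum_insert hi, Finset.card_insert_of_notMem hi]
    have h1 := Submodule.finrank_sup_add_finrank_inf_eq (V i) (⨅ j ∈ s, V j)
    have h2 : finrank ℂ ↥(V i ⊔ ⨅ j ∈ s, V j) ≤ n := by
      simpa using Submodule.finrank_le (V i ⊔ ⨅ j ∈ s, V j)
    have h1' : (finrank ℂ ↥(V i ⊔ ⨅ j ∈ s, V j) : ℤ) + (finrank ℂ ↥(V i ⊓ ⨅ j ∈ s, V j) : ℤ)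
        = (finrank ℂ (V i) : ℤ) + (finrank ℂ (⨅ j ∈ s, V j : Submodule ℂ (Fin n → ℂ)) : ℤ) := by
      exact_mod_cast h1
    have h2' : (finrank ℂ ↥(V i ⊔ ⨅ j ∈ s, V j) : ℤ) ≤ n := by exact_mod_cast h2
    push_cast
    linarith

private lemma inf_sup_span_eq {E : Type*} [AddCommGroup E] [Module ℂ E]
    {A B : Submodule ℂ E} {v : E} (hv : v ∉ A ⊔ B) :
    (A ⊔ ℂ ∙ v) ⊓ B = A ⊓ B := by
  apply le_antisymm
  · rintro x ⟨hx1, hx2⟩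
    obtain ⟨y, hy, z, hz, rfl⟩ := Submodule.mem_sup.mp hx1
    obtain ⟨t, rfl⟩ := Submodule.mem_span_singleton.mp hz
    by_cases ht : t = 0
    · subst ht
      simp only [zero_smul, add_zero] at hx2 ⊢
      exact ⟨hy, hx2⟩
    · exfalso
      apply hv
      have hmem : (y + t • v) - y ∈ A ⊔ B :=
        sub_mem (Submodule.mem_sup_right hx2) (Submodule.mem_sup_left hy)
      have h2 : t⁻¹ • ((y + t • v) - y) ∈ A ⊔ B := Submodule.smul_mem _ _ hmem
      simpa [add_sub_cancel_left, smul_smul, inv_mul_cancel₀ ht] using h2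
  · exact inf_le_inf_right _ le_sup_left

private lemma finrank_inf_sup_span_le {E : Type*} [AddCommGroup E] [Module ℂ E]
    [FiniteDimensional ℂ E] (A B : Submodule ℂ E) (v : E) :
    finrank ℂ ↥((A ⊔ ℂ ∙ v) ⊓ B) ≤ finrank ℂ ↥(A ⊓ B) + 1 := by
  have e1 := Submodule.finrank_sup_add_finrank_inf_eq (A ⊔ ℂ ∙ v) B
  have e2 := Submodule.finrank_sup_add_finrank_inf_eq A B
  have h3 : finrank ℂ ↥(A ⊔ B) ≤ finrank ℂ ↥((A ⊔ ℂ ∙ v) ⊔ B) :=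
    Submodule.finrank_mono (sup_le_sup_right le_sup_left _)
  have hs : finrank ℂ ↥(ℂ ∙ v) ≤ 1 := by
    by_cases hv : v = 0
    · subst hv
      rw [Submodule.span_zero_singleton, finrank_bot]
      omega
    · rw [finrank_span_singleton hv]
  have h4 : finrank ℂ ↥(A ⊔ ℂ ∙ v) ≤ finrank ℂ A + 1 := by
    have e3 := Submodule.finrank_sup_add_finrank_inf_eq A (ℂ ∙ v)
    omega
  omega

private lemma finrank_sup_span_eq {E : Type*} [AddCommGroup E] [Module ℂ E]
    [FiniteDimensional ℂ E] {A : Submodule ℂ E} {v : E} (hv : v ∉ A) :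
    finrank ℂ ↥(A ⊔ ℂ ∙ v) = finrank ℂ A + 1 := by
  have hv0 : v ≠ 0 := fun h => hv (by rw [h]; exact A.zero_mem)
  have hd : A ⊓ (ℂ ∙ v) = ⊥ :=
    disjoint_iff.mp ((Submodule.disjoint_span_singleton' hv0).mpr hv)
  have e := Submodule.finrank_sup_add_finrank_inf_eq A (ℂ ∙ v)
  rw [hd, finrank_bot, finrank_span_singleton hv0] at e
  omega

/-- The key step: if `finrank (V i) < a i`, we can enlarge `V i` by one dimension
keeping all the intersection-dimension constraints. -/
private lemma step_lemma (n k : ℕ) (a : Fin k → ℕ) (ha : ∀ i, a i ≤ n)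
    (V : Fin k → Submodule ℂ (Fin n → ℂ))
    (hV : ∀ L : Finset (Fin k),
      (finrank ℂ (⨅ j ∈ L, V j : Submodule ℂ (Fin n → ℂ)) : ℤ)
        ≤ (∑ l ∈ L, (a l : ℤ)) - n * ((L.card : ℤ) - 1))
    (i : Fin k) (hlt : finrank ℂ (V i) < a i) :
    ∃ V' : Fin k → Submodule ℂ (Fin n → ℂ),
      (∀ L : Finset (Fin k),
        (finrank ℂ (⨅ j ∈ L, V' j : Submodule ℂ (Fin n → ℂ)) : ℤ)
          ≤ (∑ l ∈ L, (a l : ℤ)) - n * ((L.card : ℤ) - 1)) ∧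
      (∀ j, V j ≤ V' j) ∧
      (∑ j, finrank ℂ (V' j)) = (∑ j, finrank ℂ (V j)) + 1 := by
  classical
  set T : Finset (Finset (Fin k)) :=
    Finset.univ.filter (fun L => i ∈ L ∧
      (finrank ℂ (⨅ j ∈ L, V j : Submodule ℂ (Fin n → ℂ)) : ℤ)
        = (∑ l ∈ L, (a l : ℤ)) - n * ((L.card : ℤ) - 1)) with hT
  set bad : Finset (Submodule ℂ (Fin n → ℂ)) :=
    insert (V i) (T.image (fun L => V i ⊔ ⨅ j ∈ L.erase i, V j)) with hbaddef
  have hfrtop : finrank ℂ (⊤ : Submodule ℂ (Fin n → ℂ)) = n := by simp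
  have hbad : ∀ p ∈ bad, p ≠ ⊤ := by
    intro p hp
    rw [hbaddef, Finset.mem_insert] at hp
    rcases hp with rfl | hp
    · intro htop
      rw [htop, hfrtop] at hlt
      exact absurd (ha i) (by omega)
    · obtain ⟨L, hLT, rfl⟩ := Finset.mem_image.mp hp
      rw [hT, Finset.mem_filter] at hLT
      obtain ⟨-, hiL, htight⟩ := hLT
      have hins : insert i (L.erase i) = L := Finset.insert_erase hiL
      have hVL : V i ⊓ (⨅ j ∈ L.erase i, V j) = ⨅ j ∈ L, V j := by
        conv_rhs => rw [← hins]
        rw [Finset.iInf_insert]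
      have e := Submodule.finrank_sup_add_finrank_inf_eq (V i) (⨅ j ∈ L.erase i, V j)
      rw [hVL] at e
      have e' : (finrank ℂ ↥(V i ⊔ ⨅ j ∈ L.erase i, V j) : ℤ)
          + (finrank ℂ (⨅ j ∈ L, V j : Submodule ℂ (Fin n → ℂ)) : ℤ)
          = (finrank ℂ (V i) : ℤ)
            + (finrank ℂ (⨅ j ∈ L.erase i, V j : Submodule ℂ (Fin n → ℂ)) : ℤ) := by
        exact_mod_cast e
      have h1 := hV (L.erase i)
      have hcard : (L.erase i).card + 1 = L.card := by
        rw [Finset.card_erase_of_mem hiL]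
        have : 1 ≤ L.card := Finset.card_pos.mpr ⟨i, hiL⟩
        omega
      have hcard' : ((L.erase i).card : ℤ) = (L.card : ℤ) - 1 := by omega
      have hsumL : (∑ l ∈ L, (a l : ℤ)) = (a i : ℤ) + ∑ l ∈ L.erase i, (a l : ℤ) := by
        conv_lhs => rw [← hins]
        rw [Finset.sum_insert (Finset.notMem_erase i L)]
      have hlt' : (finrank ℂ (V i) : ℤ) ≤ (a i : ℤ) - 1 := by omega
      have hfr : (finrank ℂ ↥(V i ⊔ ⨅ j ∈ L.erase i, V j) : ℤ) ≤ (n : ℤ) - 1 := by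
        rw [hcard'] at h1
        linarith [htight, e', h1, hlt']
      intro htop
      rw [htop, hfrtop] at hfr
      omega
  obtain ⟨v, hv⟩ := exists_avoid bad hbad
  have hvi : v ∉ V i := hv (V i) (Finset.mem_insert_self _ _)
  refine ⟨Function.update V i (V i ⊔ ℂ ∙ v), ?_, ?_, ?_⟩
  · intro L
    by_cases hiL : i ∈ L
    · have hins : insert i (L.erase i) = L := Finset.insert_erase hiL
      have herase : (⨅ j ∈ L.erase i, Function.update V i (V i ⊔ ℂ ∙ v) j)
          = ⨅ j ∈ L.erase i, V j :=
        iInf_congr fun j => iInf_congr fun hj => by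
          rw [Function.update_of_ne (Finset.ne_of_mem_erase hj)]
      have hINF : (⨅ j ∈ L, Function.update V i (V i ⊔ ℂ ∙ v) j)
          = (V i ⊔ ℂ ∙ v) ⊓ ⨅ j ∈ L.erase i, V j := by
        conv_lhs => rw [← hins]
        rw [Finset.iInf_insert, herase, Function.update_self]
      have hVL : V i ⊓ (⨅ j ∈ L.erase i, V j) = ⨅ j ∈ L, V j := by
        conv_rhs => rw [← hins]
        rw [Finset.iInf_insert]
      rw [hINF]
      by_cases ht : (finrank ℂ (⨅ j ∈ L, V j : Submodule ℂ (Fin n → ℂ)) : ℤ)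
          = (∑ l ∈ L, (a l : ℤ)) - n * ((L.card : ℤ) - 1)
      · have hmem : (V i ⊔ ⨅ j ∈ L.erase i, V j) ∈ bad := by
          rw [hbaddef]
          refine Finset.mem_insert_of_mem (Finset.mem_image_of_mem _ ?_)
          rw [hT, Finset.mem_filter]
          exact ⟨Finset.mem_univ _, hiL, ht⟩
        rw [inf_sup_span_eq (hv _ hmem), hVL]
        exact le_of_eq ht
      · have h2 := finrank_inf_sup_span_le (V i) (⨅ j ∈ L.erase i, V j) v
        rw [hVL] at h2
        have h3 := lt_of_le_of_ne (hV L) ht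
        have h2' : (finrank ℂ ↥((V i ⊔ ℂ ∙ v) ⊓ ⨅ j ∈ L.erase i, V j) : ℤ)
            ≤ (finrank ℂ (⨅ j ∈ L, V j : Submodule ℂ (Fin n → ℂ)) : ℤ) + 1 := by
          exact_mod_cast h2
        linarith
    · have : (⨅ j ∈ L, Function.update V i (V i ⊔ ℂ ∙ v) j) = ⨅ j ∈ L, V j :=
        iInf_congr fun j => iInf_congr fun hj => by
          rw [Function.update_of_ne (by rintro rfl; exact hiL hj)]
      rw [this]
      exact hV L
  · intro j
    by_cases hj : j = i
    · subst hj
      rw [Function.update_self]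
      exact le_sup_left
    · rw [Function.update_of_ne hj]
  · conv_rhs => rw [← Finset.sum_erase_add Finset.univ
      (fun j => finrank ℂ (V j)) (Finset.mem_univ i)]
    rw [← Finset.sum_erase_add Finset.univ
      (fun j => finrank ℂ (Function.update V i (V i ⊔ ℂ ∙ v) j)) (Finset.mem_univ i)]
    have he : ∑ j ∈ Finset.univ.erase i, finrank ℂ (Function.update V i (V i ⊔ ℂ ∙ v) j)
        = ∑ j ∈ Finset.univ.erase i, finrank ℂ (V j) :=
      Finset.sum_congr rfl fun j hj => by
        rw [Function.update_of_ne (Finset.ne_of_mem_erase hj)]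
    rw [he, Function.update_self, finrank_sup_span_eq hvi]
    omega

private lemma main_aux (n k : ℕ) (a : Fin k → ℕ) (ha : ∀ i, a i ≤ n) :
    ∀ m : ℕ, ∀ V : Fin k → Submodule ℂ (Fin n → ℂ),
    (∀ L : Finset (Fin k),
      (finrank ℂ (⨅ j ∈ L, V j : Submodule ℂ (Fin n → ℂ)) : ℤ)
        ≤ (∑ l ∈ L, (a l : ℤ)) - n * ((L.card : ℤ) - 1)) →
    (∑ j, a j ≤ m + ∑ j, finrank ℂ (V j)) →
    ∃ W : Fin k → Submodule ℂ (Fin n → ℂ),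
      (∀ j, finrank ℂ (W j) = a j) ∧ (∀ j, V j ≤ W j) ∧
      (finrank ℂ (⨅ j, W j : Submodule ℂ (Fin n → ℂ)) : ℤ)
        = (∑ j, (a j : ℤ)) - n * ((k : ℤ) - 1) := by
  intro m
  induction m with
  | zero =>
    intro V hV hsum
    have hle : ∀ j, finrank ℂ (V j) ≤ a j := by
      intro j
      have h := hV {j}
      have hsing : (⨅ l ∈ ({j} : Finset (Fin k)), V l) = V j := by simp
      rw [hsing] at h
      simp only [Finset.sum_singleton, Finset.card_singleton] at h
      omega
    have hall : ∀ j, finrank ℂ (V j) = a j := by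
      by_contra hc
      push_neg at hc
      obtain ⟨j, hj⟩ := hc
      have : ∑ l, finrank ℂ (V l) < ∑ l, a l :=
        Finset.sum_lt_sum (fun l _ => hle l)
          ⟨j, Finset.mem_univ j, lt_of_le_of_ne (hle j) hj⟩
      omega
    refine ⟨V, hall, fun j => le_rfl, ?_⟩
    have huniv : (⨅ j ∈ Finset.univ, V j : Submodule ℂ (Fin n → ℂ)) = ⨅ j, V j := by simp
    have hub := hV Finset.univ
    have hlb := inf_dim_lower n V Finset.univ
    rw [huniv] at hub hlb
    simp only [Finset.card_univ, Fintype.card_fin] at hub hlb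
    have hall' : ∀ j, (finrank ℂ (V j) : ℤ) = (a j : ℤ) := fun j => by exact_mod_cast hall j
    rw [Finset.sum_congr rfl (fun j _ => hall' j)] at hlb
    exact le_antisymm hub hlb
  | succ m ih =>
    intro V hV hsum
    by_cases hall : ∀ j, finrank ℂ (V j) = a j
    · exact ih V hV (by
        have : ∑ j, finrank ℂ (V j) = ∑ j, a j := Finset.sum_congr rfl fun j _ => hall j
        omega)
    · push_neg at hall
      obtain ⟨i, hi⟩ := hall
      have hle : finrank ℂ (V i) ≤ a i := by
        have h := hV {i}
        have hsing : (⨅ l ∈ ({i} : Finset (Fin k)), V l) = V i := by simp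
        rw [hsing] at h
        simp only [Finset.sum_singleton, Finset.card_singleton] at h
        omega
      obtain ⟨V', hV', hVV', hsum'⟩ :=
        step_lemma n k a ha V hV i (lt_of_le_of_ne hle hi)
      obtain ⟨W, hW1, hW2, hW3⟩ := ih V' hV' (by omega)
      exact ⟨W, hW1, fun j => le_trans (hVV' j) (hW2 j), hW3⟩



/-- given numbers `a 1, ..., a k ∈ [n]` with `S_{[k]} = Σ a i - n(k-1) > 0` and
subspaces `V i ⊆ ℂ^n` with `dim (⋂_{i∈L} V i) ≤ S_L` for every `L ⊆ [k]`, there exist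
subspaces `W i ⊇ V i` with `dim (W i) = a i` and `dim (⋂ W i) = S_{[k]}`. -/
theorem enlarge_to_expected_dimension (n k : ℕ) (a : Fin k → ℕ)
    (ha : ∀ i, 1 ≤ a i ∧ a i ≤ n)
    (hpos : 0 < (∑ i, (a i : ℤ)) - n * ((k : ℤ) - 1))
    (V : Fin k → Submodule ℂ (Fin n → ℂ))
    (hV : ∀ L : Finset (Fin k),
      (Module.finrank ℂ (⨅ i ∈ L, V i : Submodule ℂ (Fin n → ℂ)) : ℤ)
        ≤ (∑ l ∈ L, (a l : ℤ)) - n * ((L.card : ℤ) - 1)) :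
    ∃ W : Fin k → Submodule ℂ (Fin n → ℂ),
      (∀ i, Module.finrank ℂ (W i) = a i) ∧ (∀ i, V i ≤ W i) ∧
      (Module.finrank ℂ (⨅ i, W i : Submodule ℂ (Fin n → ℂ)) : ℤ)
        = (∑ i, (a i : ℤ)) - n * ((k : ℤ) - 1) := by
  exact main_aux n k a (fun i => (ha i).2) (∑ j, a j) V hV (by omega)
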